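/- Let u^{(1)},…,u^{(K)} ∈ ℝ^{d_u} be an ensemble with sample mean m and let H : ℝ^{d_u} → ℝ^{d_y+d_u} be differentiable with ‖∇H(x)‖ ≤ M_1 and ‖H(x′) − H(x) − ∇H(x)(x′−x)‖ ≤ M_2‖x′−x‖² for all x, x′. Then, with J = ∇H(m), the sample covariances satisfy ‖J C^{uu} Jᵀ − C^{pp}‖ ≤ M_2² K d_u² ‖C^{uu}‖² + 2 M_1 M_2 d_u √K ‖C^{uu}‖^{3/2}. -/

import Mathlib

open scoped BigOperators
open Matrix

noncomputable section

/-- Euclidean norm of a vector `v : Fin d → ℝ`. -/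
def evNorm {d : ℕ} (v : Fin d → ℝ) : ℝ := Real.sqrt (∑ i, v i ^ 2)

/-- Spectral (ℓ²-operator) norm of a real matrix. -/
def spNorm {p q : ℕ} (A : Matrix (Fin p) (Fin q) ℝ) : ℝ :=
  sSup {r : ℝ | ∃ v : Fin q → ℝ, evNorm v ≤ 1 ∧ r = evNorm (A.mulVec v)}

/-- Smallest eigenvalue (Rayleigh quotient infimum) of a square matrix. -/
def lambdaMin {d : ℕ} (A : Matrix (Fin d) (Fin d) ℝ) : ℝ :=
  sInf {r : ℝ | ∃ v : Fin d → ℝ, evNorm v = 1 ∧ r = v ⬝ᵥ A.mulVec v}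

/-- Loewner order `A ⪯ B` : `B - A` is positive semidefinite. -/
def loewnerLE {d : ℕ} (A B : Matrix (Fin d) (Fin d) ℝ) : Prop := (B - A).PosSemidef

/-- Sample mean of an ensemble of `K` vectors. -/
def sMean {K d : ℕ} (u : Fin K → Fin d → ℝ) : Fin d → ℝ := (K : ℝ)⁻¹ • ∑ i, u i

/-- Sample (cross-)covariance of two ensembles. -/
def sCov {K p q : ℕ} (a : Fin K → Fin p → ℝ) (b : Fin K → Fin q → ℝ) :
    Matrix (Fin p) (Fin q) ℝ :=
  (K : ℝ)⁻¹ • ∑ i, Matrix.of (fun j l => (a i j - sMean a j) * (b i l - sMean b l))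

/-- Jacobian matrix of a map between finite-dimensional coordinate spaces. -/
def jac {a b : ℕ} (H : (Fin a → ℝ) → Fin b → ℝ) (x : Fin a → ℝ) :
    Matrix (Fin b) (Fin a) ℝ :=
  Matrix.of fun i j => fderiv ℝ H x (Pi.single j 1) i

/-- Gradient (coordinate) vector of a scalar function. -/
def gradVec {d : ℕ} (f : (Fin d → ℝ) → ℝ) (x : Fin d → ℝ) : Fin d → ℝ :=
  fun j => fderiv ℝ f x (Pi.single j 1)

/-- The augmented (Tikhonov) observation map `u ↦ (G u, u)`. -/
def aug {du dy : ℕ} (G : (Fin du → ℝ) → Fin dy → ℝ) (u : Fin du → ℝ) :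
    Fin (dy + du) → ℝ :=
  Fin.append (G u) u

/-- The augmented noise covariance `Γ₊ = blockdiag(Γ, I)`. -/
def gammaPlus {dy du : ℕ} (Γ : Matrix (Fin dy) (Fin dy) ℝ) :
    Matrix (Fin (dy + du)) (Fin (dy + du)) ℝ :=
  Matrix.reindex finSumFinEquiv finSumFinEquiv (Matrix.fromBlocks Γ 0 0 1)

/-- `C^{uu}`: sample covariance of the ensemble. -/
def Cuu {K du : ℕ} (u : Fin K → Fin du → ℝ) : Matrix (Fin du) (Fin du) ℝ := sCov u u

/-- `C^{up}`: sample cross-covariance of the ensemble and its (augmented) observations. -/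
def Cup {K du dy : ℕ} (G : (Fin du → ℝ) → Fin dy → ℝ) (u : Fin K → Fin du → ℝ) :
    Matrix (Fin du) (Fin (dy + du)) ℝ :=
  sCov u (fun i => aug G (u i))

/-- `C^{pp}`: sample covariance of the (augmented) observations. -/
def Cpp {K du dy : ℕ} (G : (Fin du → ℝ) → Fin dy → ℝ) (u : Fin K → Fin du → ℝ) :
    Matrix (Fin (dy + du)) (Fin (dy + du)) ℝ :=
  sCov (fun i => aug G (u i)) (fun i => aug G (u i))

/-! Let `D` be the matrix with columns `u⁽ⁱ⁾ - m` and `P` the one with columns `H(u⁽ⁱ⁾) - H̄`, so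
that `C^{uu} = D Dᵀ / K` and `C^{pp} = P Pᵀ / K`. Linearizing `H` at `m` gives `P = J D + E`, where
`E` is the centred matrix of the Taylor remainders `eᵢ = H(u⁽ⁱ⁾) - H(m) - J (u⁽ⁱ⁾ - m)`; hence
`K (C^{pp} - J C^{uu} Jᵀ) = J D Eᵀ + E Dᵀ Jᵀ + E Eᵀ`. Here `‖D‖² = K ‖C^{uu}‖`, and `‖E‖` is at most
its Frobenius norm, which centring does not increase, so
`‖E‖ ≤ ∑ᵢ ‖eᵢ‖ ≤ M₂ ∑ᵢ ‖u⁽ⁱ⁾ - m‖² = M₂ K tr C^{uu} ≤ M₂ K d_u ‖C^{uu}‖`. -/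

open scoped Matrix.Norms.L2Operator

lemma evNorm_nonneg {d : ℕ} (v : Fin d → ℝ) : 0 ≤ evNorm v := Real.sqrt_nonneg _

lemma sq_evNorm {d : ℕ} (v : Fin d → ℝ) : evNorm v ^ 2 = ∑ i, v i ^ 2 :=
  Real.sq_sqrt (by positivity)

lemma evNorm_eq_norm {d : ℕ} (v : Fin d → ℝ) : evNorm v = ‖WithLp.toLp 2 v‖ := by
  simp [evNorm, EuclideanSpace.norm_eq]

lemma spNorm_eq_l2_opNorm {p q : ℕ} (A : Matrix (Fin p) (Fin q) ℝ) : spNorm A = ‖A‖ := by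
  rw [l2_opNorm_def, ← ContinuousLinearMap.sSup_unitClosedBall_eq_norm, spNorm]
  congr 1
  ext r
  simp only [Set.mem_ofPred_eq, Set.mem_image, Metric.mem_closedBall, dist_zero_right]
  constructor
  · rintro ⟨v, hv, rfl⟩
    exact ⟨WithLp.toLp 2 v, by rwa [← evNorm_eq_norm], by simp [evNorm_eq_norm]⟩
  · rintro ⟨x, hx, rfl⟩
    exact ⟨x.ofLp, by rwa [evNorm_eq_norm], by rw [evNorm_eq_norm]; rfl⟩

namespace Matrix

variable {m n : Type*} [Fintype m] [Fintype n] [DecidableEq n]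

lemma l2_opNorm_transpose [DecidableEq m] (A : Matrix m n ℝ) : ‖Aᵀ‖ = ‖A‖ := by
  rw [← conjTranspose_eq_transpose_of_trivial, l2_opNorm_conjTranspose]

lemma l2_opNorm_mul_transpose_self [DecidableEq m] (A : Matrix m n ℝ) : ‖A * Aᵀ‖ = ‖A‖ ^ 2 := by
  simpa [conjTranspose_eq_transpose_of_trivial, l2_opNorm_transpose, sq] using
    l2_opNorm_conjTranspose_mul_self Aᵀ

lemma abs_apply_le_l2_opNorm (A : Matrix m n ℝ) (i : m) (j : n) : |A i j| ≤ ‖A‖ := by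
  have hcol := l2_opNorm_mulVec A (EuclideanSpace.single j 1)
  calc |A i j| = ‖(EuclideanSpace.equiv m ℝ).symm (A *ᵥ EuclideanSpace.single j 1) i‖ := by
        simp [mulVec_single]
    _ ≤ ‖(EuclideanSpace.equiv m ℝ).symm (A *ᵥ EuclideanSpace.single j 1)‖ := PiLp.norm_apply_le _ _
    _ ≤ ‖A‖ := by simpa using hcol

lemma l2_opNorm_le_sqrt_sum_sq (A : Matrix m n ℝ) : ‖A‖ ≤ √(∑ i, ∑ j, A i j ^ 2) := by
  rw [l2_opNorm_def]
  refine ContinuousLinearMap.opNorm_le_bound _ (Real.sqrt_nonneg _) fun x => ?_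
  simp only [EuclideanSpace.norm_eq, Real.norm_eq_abs, sq_abs]
  rw [← Real.sqrt_mul (by positivity), Finset.sum_mul]
  gcongr with i
  simpa [mulVec, dotProduct] using Finset.sum_mul_sq_le_sq_mul_sq Finset.univ (A i) x.ofLp

lemma l2_opNorm_add_mul_transpose_sub_le [DecidableEq m] (A E : Matrix m n ℝ) :
    ‖(A + E) * (A + E)ᵀ - A * Aᵀ‖ ≤ 2 * ‖A‖ * ‖E‖ + ‖E‖ ^ 2 := by
  have expand : (A + E) * (A + E)ᵀ - A * Aᵀ = A * Eᵀ + E * Aᵀ + E * Eᵀ := by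
    simp only [transpose_add, Matrix.add_mul, Matrix.mul_add]; abel
  have hAE : ‖A * Eᵀ‖ ≤ ‖A‖ * ‖E‖ := (l2_opNorm_mul _ _).trans_eq (by rw [l2_opNorm_transpose])
  have hEA : ‖E * Aᵀ‖ ≤ ‖A‖ * ‖E‖ :=
    (l2_opNorm_mul _ _).trans_eq (by rw [l2_opNorm_transpose, mul_comm])
  rw [expand, ← l2_opNorm_mul_transpose_self E]
  linarith [(norm_add₃_le : ‖A * Eᵀ + E * Aᵀ + E * Eᵀ‖ ≤ _)]

lemma trace_le_card_mul_l2_opNorm (A : Matrix n n ℝ) : trace A ≤ Fintype.card n * ‖A‖ := by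
  calc trace A = ∑ i, A i i := rfl
    _ ≤ ∑ _i : n, ‖A‖ :=
        Finset.sum_le_sum fun i _ => (le_abs_self _).trans (abs_apply_le_l2_opNorm A i i)
    _ = Fintype.card n * ‖A‖ := by simp

end Matrix

lemma sum_sq_sub_mean_le {K : ℕ} (x : Fin K → ℝ) :
    ∑ i, (x i - (K : ℝ)⁻¹ * ∑ j, x j) ^ 2 ≤ ∑ i, x i ^ 2 := by
  rcases K.eq_zero_or_pos with rfl | hK
  · simp
  set μ := (K : ℝ)⁻¹ * ∑ j, x j
  have hsum : ∑ j, x j = K * μ := (mul_inv_cancel_left₀ (by positivity) _).symm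
  have expand : ∑ i, (x i - μ) ^ 2 = ∑ i, x i ^ 2 - K * μ ^ 2 := by
    simp only [sub_sq, Finset.sum_add_distrib, Finset.sum_sub_distrib, ← Finset.sum_mul,
      ← Finset.mul_sum, hsum, Finset.sum_const, Finset.card_univ, Fintype.card_fin, nsmul_eq_mul]
    ring
  rw [expand]
  nlinarith [sq_nonneg μ]

section SampleStatistics

variable {K p q : ℕ}

def deviationMatrix (a : Fin K → Fin p → ℝ) : Matrix (Fin p) (Fin K) ℝ :=
  Matrix.of fun j i => a i j - sMean a j

lemma sCov_eq_smul_mul_transpose (a : Fin K → Fin p → ℝ) (b : Fin K → Fin q → ℝ) :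
    sCov a b = (K : ℝ)⁻¹ • (deviationMatrix a * (deviationMatrix b)ᵀ) := by
  ext j l
  simp [sCov, deviationMatrix, mul_apply, Matrix.sum_apply]

lemma deviationMatrix_mul_transpose_self (a : Fin K → Fin p → ℝ) :
    deviationMatrix a * (deviationMatrix a)ᵀ = (K : ℝ) • sCov a a := by
  rcases K.eq_zero_or_pos with rfl | hK
  · ext; simp [mul_apply]
  · rw [sCov_eq_smul_mul_transpose, smul_smul, mul_inv_cancel₀ (by positivity), one_smul]

lemma sMean_add (a b : Fin K → Fin p → ℝ) : sMean (a + b) = sMean a + sMean b := by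
  simp [sMean, Finset.sum_add_distrib]

lemma sMean_mulVec (A : Matrix (Fin q) (Fin p) ℝ) (a : Fin K → Fin p → ℝ) :
    sMean (fun i => A *ᵥ a i) = A *ᵥ sMean a := by
  simp [sMean, mulVec_smul, mulVec_sum]

lemma deviationMatrix_add (a b : Fin K → Fin p → ℝ) :
    deviationMatrix (a + b) = deviationMatrix a + deviationMatrix b := by
  ext j i
  simp [deviationMatrix, sMean_add]
  ring

lemma deviationMatrix_const (c : Fin p → ℝ) : deviationMatrix (fun _ : Fin K => c) = 0 := by
  ext j i
  have hK : (K : ℝ) ≠ 0 := Nat.cast_ne_zero.mpr i.pos.ne'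
  simp [deviationMatrix, sMean, hK]

lemma deviationMatrix_mulVec (A : Matrix (Fin q) (Fin p) ℝ) (a : Fin K → Fin p → ℝ) :
    deviationMatrix (fun i => A *ᵥ a i) = A * deviationMatrix a := by
  ext l i
  simp [deviationMatrix, sMean_mulVec, mulVec, dotProduct, mul_apply, mul_sub]

lemma l2_opNorm_deviationMatrix (a : Fin K → Fin p → ℝ) :
    ‖deviationMatrix a‖ = √(K * ‖sCov a a‖) := by
  rw [← Real.norm_natCast, ← norm_smul, ← deviationMatrix_mul_transpose_self,
    l2_opNorm_mul_transpose_self, Real.sqrt_sq (norm_nonneg _)]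

lemma l2_opNorm_deviationMatrix_le_sum (a : Fin K → Fin p → ℝ) :
    ‖deviationMatrix a‖ ≤ ∑ i, evNorm (a i) := by
  calc ‖deviationMatrix a‖ ≤ √(∑ j, ∑ i, (a i j - (K : ℝ)⁻¹ * ∑ i', a i' j) ^ 2) := by
        simpa [deviationMatrix, sMean] using l2_opNorm_le_sqrt_sum_sq (deviationMatrix a)
    _ ≤ √(∑ j, ∑ i, a i j ^ 2) :=
        Real.sqrt_le_sqrt (Finset.sum_le_sum fun j _ => sum_sq_sub_mean_le fun i => a i j)
    _ = √(∑ i, evNorm (a i) ^ 2) := by simp only [sq_evNorm, Finset.sum_comm (γ := Fin p)]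
    _ ≤ ∑ i, evNorm (a i) := by
        have hnonneg : 0 ≤ ∑ i, evNorm (a i) := Finset.sum_nonneg fun i _ => evNorm_nonneg _
        rw [Real.sqrt_le_left hnonneg]
        exact Finset.sum_sq_le_sq_sum_of_nonneg fun i _ => evNorm_nonneg _

lemma sum_evNorm_sub_sMean_sq_le (a : Fin K → Fin p → ℝ) :
    ∑ i, evNorm (a i - sMean a) ^ 2 ≤ K * p * ‖sCov a a‖ := by
  calc ∑ i, evNorm (a i - sMean a) ^ 2 = trace (deviationMatrix a * (deviationMatrix a)ᵀ) := by
        simp only [sq_evNorm]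
        simp only [sq, trace, diag, mul_apply, transpose_apply, deviationMatrix, of_apply,
          Pi.sub_apply]
        exact Finset.sum_comm
    _ = K * trace (sCov a a) := by
        rw [deviationMatrix_mul_transpose_self, trace_smul, smul_eq_mul]
    _ ≤ K * (p * ‖sCov a a‖) := by
        gcongr
        simpa using trace_le_card_mul_l2_opNorm (sCov a a)
    _ = K * p * ‖sCov a a‖ := by ring

lemma l2_opNorm_deviationMatrix_le_of_le_mul_sq {r : Fin K → Fin q → ℝ} {u : Fin K → Fin p → ℝ}
    {M : ℝ} (hM : p ≠ 0 → 0 ≤ M) (hr : ∀ i, evNorm (r i) ≤ M * evNorm (u i - sMean u) ^ 2) :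
    ‖deviationMatrix r‖ ≤ M * (K * p * ‖sCov u u‖) := calc
  ‖deviationMatrix r‖ ≤ ∑ i, evNorm (r i) := l2_opNorm_deviationMatrix_le_sum r
  _ ≤ ∑ i, M * evNorm (u i - sMean u) ^ 2 := Finset.sum_le_sum fun i _ => hr i
  _ = M * ∑ i, evNorm (u i - sMean u) ^ 2 := (Finset.mul_sum ..).symm
  _ ≤ M * (K * p * ‖sCov u u‖) := by
    rcases eq_or_ne p 0 with rfl | hp
    · simp [evNorm]
    · exact mul_le_mul_of_nonneg_left (sum_evNorm_sub_sMean_sq_le u) (hM hp)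

lemma deviationMatrix_sub_mul_deviationMatrix (H : (Fin p → ℝ) → Fin q → ℝ)
    (J : Matrix (Fin q) (Fin p) ℝ) (x : Fin p → ℝ) (u : Fin K → Fin p → ℝ) :
    deviationMatrix (fun i => H (u i)) - J * deviationMatrix u =
      deviationMatrix (fun i => H (u i) - H x - J *ᵥ (u i - x)) := by
  have hsplit : (fun i => H (u i)) =
      (fun i => H (u i) - H x - J *ᵥ (u i - x)) + (fun i => J *ᵥ u i) + fun _ => H x - J *ᵥ x := by
    ext i l; simp [mulVec_sub]; ring
  rw [hsplit, deviationMatrix_add, deviationMatrix_add, deviationMatrix_const,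
    deviationMatrix_mulVec]
  abel

lemma l2_opNorm_mul_sCov_mul_transpose_sub_sCov_le (J : Matrix (Fin q) (Fin p) ℝ)
    (u : Fin K → Fin p → ℝ) (y : Fin K → Fin q → ℝ) :
    ‖J * sCov u u * Jᵀ - sCov y y‖ ≤
      (K : ℝ)⁻¹ * (2 * ‖J * deviationMatrix u‖ * ‖deviationMatrix y - J * deviationMatrix u‖ +
        ‖deviationMatrix y - J * deviationMatrix u‖ ^ 2) := by
  set A := J * deviationMatrix u
  set E := deviationMatrix y - A
  have hcov_sub : J * sCov u u * Jᵀ - sCov y y = -((K : ℝ)⁻¹ • ((A + E) * (A + E)ᵀ - A * Aᵀ)) := by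
    rw [sCov_eq_smul_mul_transpose u u, sCov_eq_smul_mul_transpose, add_sub_cancel, transpose_mul]
    simp only [Matrix.mul_smul, Matrix.smul_mul, Matrix.mul_assoc, smul_sub, A]
    abel
  rw [hcov_sub, norm_neg, norm_smul, norm_inv, Real.norm_natCast]
  gcongr
  exact l2_opNorm_add_mul_transpose_sub_le A E

end SampleStatistics

lemma inv_mul_linearization_bound_eq {k d c a b : ℝ} (hk : 0 ≤ k) (hc : 0 ≤ c) :
    k⁻¹ * (2 * (a * √(k * c)) * (b * (k * d * c)) + (b * (k * d * c)) ^ 2) =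
      b ^ 2 * k * d ^ 2 * c ^ 2 + 2 * a * b * d * √k * c ^ ((3 : ℝ) / 2) := by
  rcases hk.eq_or_lt with rfl | hk
  · simp
  have hc32 : c ^ ((3 : ℝ) / 2) = c * √c := by
    rw [show (3 : ℝ) / 2 = 1 + 1 / 2 by norm_num, Real.rpow_add' hc (by norm_num), Real.rpow_one,
      Real.sqrt_eq_rpow]
  rw [Real.sqrt_mul hk.le, hc32]
  field_simp
  ring

theorem observation_covariance_linearization_general
    {du dy K : ℕ}
    (H : (Fin du → ℝ) → Fin (dy + du) → ℝ)
    (M₁ M₂ : ℝ)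
    (hJ : ∀ x, spNorm (jac H x) ≤ M₁)
    (hTay : ∀ x x',
      evNorm (H x' - H x - (jac H x).mulVec (x' - x)) ≤ M₂ * evNorm (x' - x) ^ 2)
    (u : Fin K → Fin du → ℝ) :
    spNorm (jac H (sMean u) * sCov u u * (jac H (sMean u))ᵀ -
        sCov (fun i => H (u i)) (fun i => H (u i))) ≤
      M₂ ^ 2 * K * du ^ 2 * spNorm (sCov u u) ^ 2 +
        2 * M₁ * M₂ * du * Real.sqrt K * spNorm (sCov u u) ^ ((3 : ℝ) / 2) := by
  simp only [spNorm_eq_l2_opNorm] at hJ ⊢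
  set J := jac H (sMean u)
  have hM₂ : du ≠ 0 → 0 ≤ M₂ := fun hdu => by
    have := (evNorm_nonneg _).trans (hTay 0 (Pi.single ⟨0, Nat.pos_of_ne_zero hdu⟩ 1))
    simpa [evNorm_eq_norm] using this
  have hJD : ‖J * deviationMatrix u‖ ≤ M₁ * √(K * ‖sCov u u‖) :=
    (l2_opNorm_mul _ _).trans (by rw [l2_opNorm_deviationMatrix]; gcongr; exact hJ _)
  have hE : ‖deviationMatrix (fun i => H (u i)) - J * deviationMatrix u‖ ≤
      M₂ * (K * du * ‖sCov u u‖) := by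
    rw [deviationMatrix_sub_mul_deviationMatrix H J (sMean u)]
    exact l2_opNorm_deviationMatrix_le_of_le_mul_sq hM₂ fun i => hTay _ (u i)
  have hM₁ : 0 ≤ M₁ := (norm_nonneg _).trans (hJ 0)
  calc _ ≤ _ := l2_opNorm_mul_sCov_mul_transpose_sub_sCov_le J u fun i => H (u i)
    _ ≤ (K : ℝ)⁻¹ * (2 * (M₁ * √(K * ‖sCov u u‖)) * (M₂ * (K * du * ‖sCov u u‖)) +
          (M₂ * (K * du * ‖sCov u u‖)) ^ 2) := by gcongr
    _ = _ := inv_mul_linearization_bound_eq (Nat.cast_nonneg K) (norm_nonneg _)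

/-- Lemma: `J Cᵘᵘ Jᵀ` approximates `Cᵖᵖ`. -/
theorem observation_covariance_linearization
    {du dy K : ℕ}
    (H : (Fin du → ℝ) → Fin (dy + du) → ℝ)
    (hdiff : Differentiable ℝ H)
    (M₁ M₂ : ℝ)
    (hJ : ∀ x, spNorm (jac H x) ≤ M₁)
    (hTay : ∀ x x',
      evNorm (H x' - H x - (jac H x).mulVec (x' - x)) ≤ M₂ * evNorm (x' - x) ^ 2)
    (u : Fin K → Fin du → ℝ) :
    spNorm (jac H (sMean u) * sCov u u * (jac H (sMean u))ᵀ -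
        sCov (fun i => H (u i)) (fun i => H (u i))) ≤
      M₂ ^ 2 * K * du ^ 2 * spNorm (sCov u u) ^ 2 +
        2 * M₁ * M₂ * du * Real.sqrt K * spNorm (sCov u u) ^ ((3 : ℝ) / 2) :=
  observation_covariance_linearization_general H M₁ M₂ hJ hTay u
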